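/- arXiv:gr-qc/0207086 — 3 statements merged into one kernel-verified Lean document; each statement's English description precedes it below -/
import Mathlib

section
/- Let m > 0, a > 0 satisfy 2√(m² + a²) > 1, and let θ₀ ∈ ℝ. Then for every s ≥ 0 one has t₋ < t₊ - e^{-s} < t₊, hence U(t₊ - e^{-s}) > 0, and therefore the value of the extended Taub–NUT quadratic form at (t₊ - e^{-s}, θ₀) on the vector (e^{-s}, e^{-s}/(2aU(t₊ - e^{-s})), 0, 0), which equals -e^{-2s}/U(t₊ - e^{-s}), is strictly negative; i.e. the curve α is timelike for all s ≥ 0. -/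
/-- The Taub–NUT potential `U(t) = -1 + 2(mt + a²)/(a² + t²)`. -/
noncomputable def taubNUT_U (m a t : ℝ) : ℝ := -1 + 2 * (m * t + a ^ 2) / (a ^ 2 + t ^ 2)

/-- `t₊ = m + √(m² + a²)`. -/
noncomputable def tPlus (m a : ℝ) : ℝ := m + Real.sqrt (m ^ 2 + a ^ 2)

/-- `t₋ = m - √(m² + a²)`. -/
noncomputable def tMinus (m a : ℝ) : ℝ := m - Real.sqrt (m ^ 2 + a ^ 2)

/-- The extended Taub–NUT quadratic form at `(t, θ)` on `ℝ⁴`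
(components along `∂/∂t, ∂/∂ψ', ∂/∂θ, ∂/∂φ`). -/
noncomputable def taubNUT_Q (m a t θ : ℝ) (v : Fin 4 → ℝ) : ℝ :=
  -(4 * a) * v 0 * (v 1 + Real.cos θ * v 3)
    + 4 * a ^ 2 * taubNUT_U m a t * (v 1 + Real.cos θ * v 3) ^ 2
    + (t ^ 2 + a ^ 2) * ((v 2) ^ 2 + (Real.sin θ) ^ 2 * (v 3) ^ 2)

lemma taubNUT_U_pos (m a t : ℝ) (ha : 0 < a)
    (h1 : tMinus m a < t) (h2 : t < tPlus m a) : 0 < taubNUT_U m a t := by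
  have hd : 0 < a ^ 2 + t ^ 2 := by positivity
  have hr : Real.sqrt (m ^ 2 + a ^ 2) ^ 2 = m ^ 2 + a ^ 2 :=
    Real.sq_sqrt (by positivity)
  have hU : taubNUT_U m a t = (tPlus m a - t) * (t - tMinus m a) / (a ^ 2 + t ^ 2) := by
    unfold taubNUT_U tPlus tMinus
    field_simp
    nlinarith [hr]
  rw [hU]
  have := sub_pos.mpr h1
  have := sub_pos.mpr h2
  positivity

theorem taubNUT_alpha_timelike (m a : ℝ) (hm : 0 < m) (ha : 0 < a)
    (hma : 1 < 2 * Real.sqrt (m ^ 2 + a ^ 2)) (θ₀ : ℝ) :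
    ∀ s : ℝ, 0 ≤ s →
      tMinus m a < tPlus m a - Real.exp (-s) ∧
      tPlus m a - Real.exp (-s) < tPlus m a ∧
      0 < taubNUT_U m a (tPlus m a - Real.exp (-s)) ∧
      taubNUT_Q m a (tPlus m a - Real.exp (-s)) θ₀
        ![Real.exp (-s),
          Real.exp (-s) / (2 * a * taubNUT_U m a (tPlus m a - Real.exp (-s))), 0, 0]
        = -Real.exp (-(2 * s)) / taubNUT_U m a (tPlus m a - Real.exp (-s)) ∧
      taubNUT_Q m a (tPlus m a - Real.exp (-s)) θ₀
        ![Real.exp (-s),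
          Real.exp (-s) / (2 * a * taubNUT_U m a (tPlus m a - Real.exp (-s))), 0, 0]
        < 0 := by
  intro s hs
  have hexp : 0 < Real.exp (-s) := Real.exp_pos _
  have hexp1 : Real.exp (-s) ≤ 1 := Real.exp_le_one_iff.mpr (by linarith)
  have h1 : tMinus m a < tPlus m a - Real.exp (-s) := by
    unfold tMinus tPlus; linarith
  have h2 : tPlus m a - Real.exp (-s) < tPlus m a := by linarith
  have hU := taubNUT_U_pos m a _ ha h1 h2
  refine ⟨h1, h2, hU, ?_, ?_⟩
  · have hUne : taubNUT_U m a (tPlus m a - Real.exp (-s)) ≠ 0 := ne_of_gt hU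
    have hane : a ≠ 0 := ne_of_gt ha
    have he2 : Real.exp (-(2 * s)) = Real.exp (-s) * Real.exp (-s) := by
      rw [← Real.exp_add]; ring_nf
    unfold taubNUT_Q
    simp only [Matrix.cons_val_zero, Matrix.cons_val_one, Matrix.head_cons,
      Matrix.cons_val_two, Matrix.tail_cons, Matrix.cons_val_three]
    rw [he2]
    field_simp
    ring
  · have hQ : taubNUT_Q m a (tPlus m a - Real.exp (-s)) θ₀
        ![Real.exp (-s),
          Real.exp (-s) / (2 * a * taubNUT_U m a (tPlus m a - Real.exp (-s))), 0, 0]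
        = -Real.exp (-(2 * s)) / taubNUT_U m a (tPlus m a - Real.exp (-s)) := by
      have hUne : taubNUT_U m a (tPlus m a - Real.exp (-s)) ≠ 0 := ne_of_gt hU
      have hane : a ≠ 0 := ne_of_gt ha
      have he2 : Real.exp (-(2 * s)) = Real.exp (-s) * Real.exp (-s) := by
        rw [← Real.exp_add]; ring_nf
      unfold taubNUT_Q
      simp only [Matrix.cons_val_zero, Matrix.cons_val_one, Matrix.head_cons,
        Matrix.cons_val_two, Matrix.tail_cons, Matrix.cons_val_three]
      rw [he2]
      field_simp
      ring
    rw [hQ]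
    have : 0 < Real.exp (-(2 * s)) := Real.exp_pos _
    exact div_neg_of_neg_of_pos (by linarith) hU
end

section
/- Let m > 0 and 0 < a < 1 satisfy √(m² + a²) > 1. Then for every t ∈ [t₊ - 1, t₊] one has m < t, hence 0 ≤ U(t) ≤ 1, hence aU(t) < 1, and therefore 4a·(aU(t) - 1) < 0; i.e. the value of the extended Taub–NUT quadratic form on the vector (1, 1, 0, 0) is strictly negative at every point of the curve β, so β is timelike. -/
theorem taubNUT_beta_timelike (m a : ℝ) (hm : 0 < m) (ha : 0 < a) (ha1 : a < 1)
    (hma : 1 < Real.sqrt (m ^ 2 + a ^ 2)) :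
    ∀ t ∈ Set.Icc (tPlus m a - 1) (tPlus m a),
      m < t ∧ 0 ≤ taubNUT_U m a t ∧ taubNUT_U m a t ≤ 1 ∧
      a * taubNUT_U m a t < 1 ∧ 4 * a * (a * taubNUT_U m a t - 1) < 0 := by
  intro t ht
  obtain ⟨ht1, ht2⟩ := ht
  have hs : Real.sqrt (m ^ 2 + a ^ 2) ^ 2 = m ^ 2 + a ^ 2 :=
    Real.sq_sqrt (by positivity)
  unfold tPlus at ht1 ht2
  have hmt : m < t := by linarith
  have hden : 0 < a ^ 2 + t ^ 2 := by positivity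
  have hU1 : taubNUT_U m a t ≤ 1 := by
    have h1 : 2 * (m * t + a ^ 2) / (a ^ 2 + t ^ 2) ≤ 2 := by
      rw [div_le_iff₀ hden]; nlinarith
    unfold taubNUT_U; linarith
  have hU0 : 0 ≤ taubNUT_U m a t := by
    have h1 : 1 ≤ 2 * (m * t + a ^ 2) / (a ^ 2 + t ^ 2) := by
      rw [le_div_iff₀ hden]; nlinarith
    unfold taubNUT_U; linarith
  have haU : a * taubNUT_U m a t < 1 := by nlinarith
  exact ⟨hmt, hU0, hU1, haU, by nlinarith⟩
end

section
/- Let m > 0, a > 0 satisfy √(m² + a²) > 1. Then for every s ≥ 0 one has 0 < U(t₊ - e^{-s}) ≤ 1, and hence the pointwise length element of the curve α satisfies e^{-s}/√(U(t₊ - e^{-s})) ≥ e^{-s}. -/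
theorem taubNUT_alpha_length_element (m a : ℝ) (hm : 0 < m) (ha : 0 < a)
    (hma : 1 < Real.sqrt (m ^ 2 + a ^ 2)) :
    ∀ s : ℝ, 0 ≤ s →
      0 < taubNUT_U m a (tPlus m a - Real.exp (-s)) ∧
      taubNUT_U m a (tPlus m a - Real.exp (-s)) ≤ 1 ∧
      Real.exp (-s) ≤
        Real.exp (-s) / Real.sqrt (taubNUT_U m a (tPlus m a - Real.exp (-s))) := by
  intro s hs
  set r := Real.sqrt (m ^ 2 + a ^ 2) with hr
  have hr2 : r ^ 2 = m ^ 2 + a ^ 2 := Real.sq_sqrt (by positivity)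
  set ε := Real.exp (-s) with hε
  have hε0 : 0 < ε := Real.exp_pos _
  have hε1 : ε ≤ 1 := Real.exp_le_one_iff.mpr (by linarith)
  set t := tPlus m a - ε with ht
  have ht' : t = m + r - ε := by simp [ht, tPlus, hr]
  have hd : 0 < a ^ 2 + t ^ 2 := by positivity
  have hU : taubNUT_U m a t = -1 + 2 * (m * t + a ^ 2) / (a ^ 2 + t ^ 2) := rfl
  have hUpos : 0 < taubNUT_U m a t := by
    rw [hU]
    have h1 : a ^ 2 + t ^ 2 < 2 * (m * t + a ^ 2) := by nlinarith
    have := (one_lt_div hd).mpr h1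
    linarith
  have hUle : taubNUT_U m a t ≤ 1 := by
    rw [hU]
    have h1 : 2 * (m * t + a ^ 2) ≤ 2 * (a ^ 2 + t ^ 2) := by nlinarith
    have := (div_le_iff₀ hd).mpr (by linarith : 2 * (m * t + a ^ 2) ≤ 2 * (a ^ 2 + t ^ 2))
    linarith
  refine ⟨hUpos, hUle, ?_⟩
  have hs0 : 0 < Real.sqrt (taubNUT_U m a t) := Real.sqrt_pos.mpr hUpos
  have hs1 : Real.sqrt (taubNUT_U m a t) ≤ 1 := by
    rw [show (1:ℝ) = Real.sqrt 1 by simp]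
    exact Real.sqrt_le_sqrt hUle
  rw [le_div_iff₀ hs0]
  nlinarith
end
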